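/- Define SFO formulas inductively: atoms θ₁ < θ₂ (where terms evaluate to reals under a trace and valuation), negation, disjunction, and existential quantification of a variable over an interval of reals. Define the Boolean semantics ⊨ and the robustness μ with μ(atom) = ⟦θ₂⟧ − ⟦θ₁⟧, μ(¬φ) = −μ(φ), μ(φ₁∨φ₂) = max, μ(∃x∈J.φ) = sup over a∈J of μ with the valuation updated at x. Then for every formula φ, trace w, and valuation ν: if μ(w,ν,φ) > 0 then w,ν ⊨ φ, and if μ(w,ν,φ) < 0 then w,ν ⊭ φ. -/
import Mathlib


inductive Term (V F : Type) where
  | const : ℚ → Term V F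
  | rconst : ℝ → Term V F
  | var : V → Term V F
  | add : Term V F → Term V F → Term V F
  | sub : Term V F → Term V F → Term V F
  | app : F → Term V F → Term V F

noncomputable def Term.sem {V F W : Type} (sig : W → F → ℝ → ℝ) :
    Term V F → W → (V → ℝ) → ℝ
  | .const n, _, _ => (n : ℝ)
  | .rconst r, _, _ => r
  | .var x, _, ν => ν x
  | .add a b, w, ν => a.sem sig w ν + b.sem sig w ν
  | .sub a b, w, ν => a.sem sig w ν - b.sem sig w ν
  | .app f τ, w, ν => sig w f (τ.sem sig w ν)

inductive Formula (V F : Type) where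
  | atom : Term V F → Term V F → Formula V F
  | not : Formula V F → Formula V F
  | or : Formula V F → Formula V F → Formula V F
  | ex : V → Set ℝ → Formula V F → Formula V F

def Formula.sat {V F W : Type} [DecidableEq V] (sig : W → F → ℝ → ℝ) (w : W) :
    Formula V F → (V → ℝ) → Prop
  | .atom a b, ν => a.sem sig w ν < b.sem sig w ν
  | .not φ, ν => ¬ φ.sat sig w ν
  | .or φ ψ, ν => φ.sat sig w ν ∨ ψ.sat sig w ν
  | .ex x J φ, ν => ∃ a ∈ J, φ.sat sig w (Function.update ν x a)

noncomputable def Formula.mu {V F W : Type} [DecidableEq V] (sig : W → F → ℝ → ℝ) (w : W) :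
    Formula V F → (V → ℝ) → EReal
  | .atom a b, ν => ((b.sem sig w ν - a.sem sig w ν : ℝ) : EReal)
  | .not φ, ν => - φ.mu sig w ν
  | .or φ ψ, ν => max (φ.mu sig w ν) (ψ.mu sig w ν)
  | .ex x J φ, ν => ⨆ a ∈ J, φ.mu sig w (Function.update ν x a)

def Formula.wf {V F : Type} : Formula V F → Prop
  | .atom _ _ => True
  | .not φ => φ.wf
  | .or φ ψ => φ.wf ∧ ψ.wf
  | .ex _ J φ => J.Nonempty ∧ φ.wf

theorem robustness_soundness {V F W : Type} [DecidableEq V]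
    (sig : W → F → ℝ → ℝ) (φ : Formula V F) (hwf : φ.wf) (w : W) (ν : V → ℝ) :
    (0 < φ.mu sig w ν → φ.sat sig w ν) ∧
    (φ.mu sig w ν < 0 → ¬ φ.sat sig w ν) := by
  induction φ generalizing ν with
  | atom a b =>
    constructor
    · intro h
      simp only [Formula.mu, Formula.sat] at *
      have := EReal.coe_pos.mp h
      linarith
    · intro h
      simp only [Formula.mu, Formula.sat] at *
      have := EReal.coe_neg'.mp h
      intro hc; linarith
  | not φ ih =>
    obtain ⟨ih1, ih2⟩ := ih hwf ν
    constructor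
    · intro h
      simp only [Formula.mu] at h
      have : φ.mu sig w ν < 0 := by
        rw [← neg_neg (0 : EReal)] at h
        exact EReal.neg_lt_neg_iff.mp (by simpa using h)
      exact ih2 this
    · intro h hc
      simp only [Formula.mu] at h
      have : 0 < φ.mu sig w ν := by
        rw [show (0 : EReal) = -0 by simp] at h
        exact EReal.neg_lt_neg_iff.mp (by simpa using h)
      exact hc (ih1 this)
  | or φ ψ ihφ ihψ =>
    obtain ⟨h1, h2⟩ := ihφ hwf.1 ν
    obtain ⟨h3, h4⟩ := ihψ hwf.2 ν
    constructor
    · intro h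
      simp only [Formula.mu, lt_max_iff] at h
      exact h.elim (fun h => Or.inl (h1 h)) (fun h => Or.inr (h3 h))
    · intro h
      simp only [Formula.mu, max_lt_iff] at h
      rintro (hc | hc)
      exacts [h2 h.1 hc, h4 h.2 hc]
  | ex x J φ ih =>
    constructor
    · intro h
      simp only [Formula.mu] at h
      obtain ⟨a, ha⟩ := lt_iSup_iff.mp h
      obtain ⟨haJ, ha⟩ := lt_iSup_iff.mp ha
      exact ⟨a, haJ, (ih hwf.2 _).1 ha⟩
    · intro h
      simp only [Formula.mu] at h
      rintro ⟨a, haJ, hsat⟩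
      have hle : φ.mu sig w (Function.update ν x a) ≤ ⨆ a ∈ J, φ.mu sig w (Function.update ν x a) :=
        le_iSup₂ (f := fun a _ => φ.mu sig w (Function.update ν x a)) a haJ
      exact (ih hwf.2 _).2 (lt_of_le_of_lt hle h) hsat
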